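/- With the notation of the context, let m be a Motzkin path and 1 ≤ i ≤ r−1 a mutation site satisfying case (i) or case (ii), let m' be the mutated Motzkin path, and let y' be the mutated noncommutative weights. Assume (genericity) that every element of E inverted in forming ŷ(m), ŷ(m') (the latter built from y'), y', and in the recursive evaluation of J^{(r)}(ŷ(m)) and J^{(r)}(ŷ(m')) is nonzero. Set F_m(t) = 1 + t·J^{(r)}(ŷ(m))·y_1 and F_{m'}(t) = 1 + t·J^{(r)}(ŷ(m'))·y'_1. Then F_m(t) = F_{m'}(t) if i ≥ 2, and F_m(t) = 1 + t·F_{m'}(t)·y_1 if i = 1. -/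
import Mathlib


namespace Stmt8

variable {E : Type*} [DivisionRing E]

/-- The noncommutative Jacobi-type finite continued fraction `J^{(r)}(x_1,…,x_{2r+1})`,
consuming the `2r+1` variables and bottoming out at `(1 - x_{2r+1})⁻¹`:
`Jnc 0 x = (1 - x 1)⁻¹` and `Jnc (k+1) x = (1 - x 1 - Jnc k (x ∘ (·+2)) * x 2)⁻¹`,
so that `Jnc r x = J^{(r)}(x_1,…,x_{2r+1})`. -/
def Jnc : ℕ → (ℕ → E) → E
  | 0, x => (1 - x 1)⁻¹
  | (k+1), x => (1 - x 1 - Jnc k (fun i => x (i + 2)) * x 2)⁻¹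

/-- Genericity: all elements inverted in the recursive evaluation of `Jnc` are nonzero. -/
def JncGen : ℕ → (ℕ → E) → Prop
  | 0, x => 1 - x 1 ≠ 0
  | (k+1), x => (1 - x 1 - Jnc k (fun i => x (i + 2)) * x 2 ≠ 0) ∧
      JncGen k (fun i => x (i + 2))

/-- The noncommutative hatted weights `ŷ(m)` of (3.2): for `1 ≤ u ≤ r-1`,
if `m_{u+1} = m_u + 1` then `ŷ_{2u-1} = t(y_{2u-1}+y_{2u})`, `ŷ_{2u} = t²y_{2u+1}y_{2u}`;
if `m_{u+1} = m_u - 1` then `ŷ_{2u-1} = t·y_{2u-1} - y_{2u+1}⁻¹y_{2u}`,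
`ŷ_{2u} = y_{2u+1}⁻¹y_{2u}`; otherwise `ŷ_{2u-1} = t·y_{2u-1}`, `ŷ_{2u} = t·y_{2u}`;
and `ŷ_j = t·y_j` for `j ≥ 2r-1`. -/
def yhatnc (r : ℕ) (t : E) (y : ℕ → E) (m : ℕ → ℤ) : ℕ → E :=
  fun j =>
    if j % 2 = 1 then
      if (j + 1) / 2 + 1 ≤ r then
        if m ((j + 1) / 2 + 1) = m ((j + 1) / 2) + 1 then t * (y j + y (j + 1))
        else if m ((j + 1) / 2 + 1) = m ((j + 1) / 2) - 1 then
          t * y j - (y (j + 2))⁻¹ * y (j + 1)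
        else t * y j
      else t * y j
    else
      if j / 2 + 1 ≤ r then
        if m (j / 2 + 1) = m (j / 2) + 1 then t ^ 2 * (y (j + 1) * y j)
        else if m (j / 2 + 1) = m (j / 2) - 1 then (y (j + 1))⁻¹ * y j
        else t * y j
      else t * y j

lemma Jnc_succ (k : ℕ) (x : ℕ → E) :
    Jnc (k+1) x = (1 - x 1 - Jnc k (fun i => x (i + 2)) * x 2)⁻¹ := rfl

lemma Jnc_congr : ∀ (k : ℕ) (x x' : ℕ → E),
    (∀ j, 1 ≤ j → j ≤ 2*k+1 → x j = x' j) → Jnc k x = Jnc k x'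
  | 0, x, x', h => by
      simp only [Jnc]; rw [h 1 (by omega) (by omega)]
  | (k+1), x, x', h => by
      simp only [Jnc]
      rw [Jnc_congr k (fun i => x (i+2)) (fun i => x' (i+2))
          (fun j hj1 hj2 => h (j+2) (by omega) (by omega))]
      rw [h 1 (by omega) (by omega)]
      rw [h 2 (by omega) (by omega)]

lemma Jnc_ext (l : ℕ) : ∀ (k : ℕ) (x x' : ℕ → E),
    (∀ j, 1 ≤ j → j ≤ 2*l → x j = x' j) →
    Jnc k (fun j => x (j + 2*l)) = Jnc k (fun j => x' (j + 2*l)) →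
    Jnc (k + l) x = Jnc (k + l) x' := by
  induction l with
  | zero => intro k x x' _ htail; exact htail
  | succ l ih =>
      intro k x x' h htail
      have hmid : Jnc (k + l) (fun i => x (i+2)) = Jnc (k + l) (fun i => x' (i+2)) := by
        apply ih k _ _ (fun j h1 h2 => h (j+2) (by omega) (by omega))
        show Jnc k (fun j => x (j + 2*l + 2)) = Jnc k (fun j => x' (j + 2*l + 2))
        have e : (fun j => x (j + 2*l + 2)) = (fun j => x (j + 2*(l+1))) := by
          funext j; congr 1
        have e' : (fun j => x' (j + 2*l + 2)) = (fun j => x' (j + 2*(l+1))) := by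
          funext j; congr 1
        rw [e, e']; exact htail
      show Jnc ((k + l) + 1) x = Jnc ((k + l) + 1) x'
      rw [Jnc_succ, Jnc_succ, hmid]
      rw [h 1 (by omega) (by omega)]
      rw [h 2 (by omega) (by omega)]

lemma JncGen_drop (l : ℕ) : ∀ (k : ℕ) (x : ℕ → E),
    JncGen (k + l) x → JncGen k (fun j => x (j + 2*l)) := by
  induction l with
  | zero => intro k x h; exact h
  | succ l ih =>
      intro k x h
      obtain ⟨-, h2⟩ := (h : JncGen ((k+l)+1) x)
      have h3 := ih k (fun i => x (i+2)) h2
      have e : (fun j => (fun i => x (i+2)) (j + 2*l)) = (fun j => x (j + 2*(l+1))) := by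
        funext j; show x (j + 2*l + 2) = _; congr 1
      exact e ▸ h3

lemma comm3 {t : E} (ht : ∀ z : E, t * z = z * t) (u v : E) : t * (u * v) = u * (t * v) := by
  rw [← mul_assoc, ht u, mul_assoc]

lemma key0 (t Dd M P P' : E) (ht : ∀ z : E, t * z = z * t)
    (hP : P ≠ 0) (hP' : P' ≠ 0) (hME : P' = M * P) (hMD : M = P' + t * Dd) :
    P⁻¹ = 1 + t * P'⁻¹ * Dd := by
  have h1 : P' * P⁻¹ = M := by
    conv_lhs => rw [hME]
    rw [mul_assoc, mul_inv_cancel₀ hP, mul_one]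
  have h2 : P⁻¹ = P'⁻¹ * (P' + t * Dd) := by
    rw [← hMD, ← h1, ← mul_assoc, inv_mul_cancel₀ hP', one_mul]
  rw [h2, mul_add, inv_mul_cancel₀ hP', ← comm3 ht P'⁻¹ Dd, ← mul_assoc]

lemma key1 (t Dd cb X : E) (ht : ∀ z : E, t * z = z * t) (hD : Dd ≠ 0) (hX : X ≠ 0)
    (hXu : X + t * (cb * Dd⁻¹) ≠ 0)
    (hP : 1 - t * Dd - X⁻¹ * (t ^ 2 * cb) ≠ 0)
    (hP' : 1 - t * Dd - (X + t * (cb * Dd⁻¹))⁻¹ * (t * (cb * Dd⁻¹)) ≠ 0) :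
    (1 - t * Dd - X⁻¹ * (t ^ 2 * cb))⁻¹ =
      1 + t * (1 - t * Dd - (X + t * (cb * Dd⁻¹))⁻¹ * (t * (cb * Dd⁻¹)))⁻¹ * Dd := by
  set u := t * (cb * Dd⁻¹) with hu
  have hsplit : (X + u)⁻¹ * X = 1 - (X + u)⁻¹ * u := by
    rw [eq_sub_iff_add_eq, ← mul_add, inv_mul_cancel₀ hXu]
  have e2 : u * (t * Dd) = t ^ 2 * cb := by
    rw [hu, mul_assoc, ← comm3 ht (cb * Dd⁻¹) Dd, ← mul_assoc, ← mul_assoc,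
      mul_assoc (t*t), inv_mul_cancel_right₀ hD, ← pow_two]
  have e1 : X * (1 - t * Dd - X⁻¹ * (t ^ 2 * cb)) = X - (X + u) * (t * Dd) := by
    rw [mul_sub, mul_sub, mul_one, mul_inv_cancel_left₀ hX, add_mul, e2]
    abel
  have hMD : (X + u)⁻¹ * X = (1 - t * Dd - (X + u)⁻¹ * u) + t * Dd := by
    rw [hsplit]; abel
  have hME : 1 - t * Dd - (X + u)⁻¹ * u = ((X + u)⁻¹ * X) * (1 - t * Dd - X⁻¹ * (t ^ 2 * cb)) := by
    rw [mul_assoc, e1, mul_sub, inv_mul_cancel_left₀ hXu, hsplit]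
    abel
  exact key0 t Dd ((X + u)⁻¹ * X) _ _ ht hP hP' hME hMD

lemma key2 (t aa bb cc X : E) (ht : ∀ z : E, t * z = z * t) (ha : aa ≠ 0) (hc : cc ≠ 0)
    (hD : aa + bb ≠ 0) (hX : X ≠ 0)
    (hX' : (1:E) - (1 - X) * (aa * (aa + bb)⁻¹) ≠ 0)
    (hP : 1 - t * aa - X⁻¹ * (t * bb) ≠ 0)
    (hP' : 1 - (t * (aa + bb) - (cc * aa * (aa + bb)⁻¹)⁻¹ * (cc * bb * (aa + bb)⁻¹)) -
        (1 - (1 - X) * (aa * (aa + bb)⁻¹))⁻¹ * ((cc * aa * (aa + bb)⁻¹)⁻¹ * (cc * bb * (aa + bb)⁻¹)) ≠ 0) :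
    (1 - t * aa - X⁻¹ * (t * bb))⁻¹ =
      1 + t * (1 - (t * (aa + bb) - (cc * aa * (aa + bb)⁻¹)⁻¹ * (cc * bb * (aa + bb)⁻¹)) -
        (1 - (1 - X) * (aa * (aa + bb)⁻¹))⁻¹ * ((cc * aa * (aa + bb)⁻¹)⁻¹ * (cc * bb * (aa + bb)⁻¹)))⁻¹ *
        (aa + bb) := by
  have hv : (cc * aa * (aa + bb)⁻¹)⁻¹ * (cc * bb * (aa + bb)⁻¹)
      = (aa + bb) * (aa⁻¹ * (bb * (aa + bb)⁻¹)) := by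
    rw [mul_inv_rev, mul_inv_rev, inv_inv]
    simp only [mul_assoc]
    rw [inv_mul_cancel_left₀ hc]
  have hX'el : (1:E) - (1 - X) * (aa * (aa + bb)⁻¹) = (bb + X * aa) * (aa + bb)⁻¹ := by
    have e : (bb + X * aa) * (aa + bb)⁻¹ = ((aa + bb) - (1 - X) * aa) * (aa + bb)⁻¹ := by
      congr 1; noncomm_ring
    rw [e, sub_mul (aa + bb) ((1 - X) * aa) ((aa + bb)⁻¹), mul_inv_cancel₀ hD, mul_assoc]
  have hY : bb + X * aa ≠ 0 := by
    intro h; apply hX'; rw [hX'el, h, zero_mul]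
  have hX'inv : ((1:E) - (1 - X) * (aa * (aa + bb)⁻¹))⁻¹ = (aa + bb) * (bb + X * aa)⁻¹ := by
    rw [hX'el, mul_inv_rev, inv_inv]
  have step : (aa + bb) * ((bb + X * aa)⁻¹ * X)
      = 1 + (cc * aa * (aa + bb)⁻¹)⁻¹ * (cc * bb * (aa + bb)⁻¹)
        - (aa + bb) * ((bb + X * aa)⁻¹ * ((cc * aa * (aa + bb)⁻¹)⁻¹ * (cc * bb * (aa + bb)⁻¹))) := by
    apply mul_left_cancel₀ (mul_ne_zero hY (inv_ne_zero hD))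
    rw [mul_assoc (bb + X * aa) (aa + bb)⁻¹, inv_mul_cancel_left₀ hD, mul_inv_cancel_left₀ hY]
    rw [mul_assoc (bb + X * aa) (aa + bb)⁻¹]
    rw [mul_sub, mul_add, mul_one]
    rw [inv_mul_cancel_left₀ hD]
    rw [hv]
    rw [inv_mul_cancel_left₀ hD]
    rw [mul_sub, mul_add]
    rw [mul_inv_cancel_left₀ hY]
    rw [add_mul, add_mul]
    rw [mul_assoc X aa ((aa + bb)⁻¹)]
    rw [mul_assoc X aa (aa⁻¹ * (bb * (aa + bb)⁻¹))]
    rw [add_mul aa bb (aa⁻¹ * (bb * (aa + bb)⁻¹))]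
    rw [mul_inv_cancel_left₀ ha]
    have efin : X * (aa * (aa + bb)⁻¹) + X * (bb * (aa + bb)⁻¹) = X := by
      rw [← mul_add, ← add_mul, mul_inv_cancel₀ hD, mul_one]
    conv_lhs => rw [← efin]
    abel
  have hMD : (aa + bb) * ((bb + X * aa)⁻¹ * X)
      = (1 - (t * (aa + bb) - (cc * aa * (aa + bb)⁻¹)⁻¹ * (cc * bb * (aa + bb)⁻¹)) -
        (1 - (1 - X) * (aa * (aa + bb)⁻¹))⁻¹ * ((cc * aa * (aa + bb)⁻¹)⁻¹ * (cc * bb * (aa + bb)⁻¹)))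
        + t * (aa + bb) := by
    rw [hX'inv, mul_assoc (aa+bb) (bb + X*aa)⁻¹, step]
    abel
  have e1 : X * (1 - t * aa - X⁻¹ * (t * bb)) = X - t * (bb + X * aa) := by
    rw [mul_sub, mul_sub, mul_one, mul_inv_cancel_left₀ hX, ← comm3 ht X aa, mul_add]
    abel
  have hME : (1 - (t * (aa + bb) - (cc * aa * (aa + bb)⁻¹)⁻¹ * (cc * bb * (aa + bb)⁻¹)) -
        (1 - (1 - X) * (aa * (aa + bb)⁻¹))⁻¹ * ((cc * aa * (aa + bb)⁻¹)⁻¹ * (cc * bb * (aa + bb)⁻¹)))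
      = ((aa + bb) * ((bb + X * aa)⁻¹ * X)) * (1 - t * aa - X⁻¹ * (t * bb)) := by
    rw [mul_assoc (aa+bb), mul_assoc (bb + X*aa)⁻¹, e1]
    rw [mul_sub (bb + X*aa)⁻¹, mul_sub (aa+bb)]
    rw [← comm3 ht (bb + X*aa)⁻¹ (bb + X*aa), inv_mul_cancel₀ hY, mul_one, ← ht (aa+bb)]
    rw [hMD]
    abel
  exact key0 t (aa + bb) ((aa + bb) * ((bb + X * aa)⁻¹ * X)) _ _ ht hP hP' hME hMD

lemma yh_odd (r : ℕ) (t : E) (y : ℕ → E) (m : ℕ → ℤ) (u : ℕ) (hur : u + 2 ≤ r) :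
    yhatnc r t y m (2*u+1) =
      if m (u+2) = m (u+1) + 1 then t * (y (2*u+1) + y (2*u+2))
      else if m (u+2) = m (u+1) - 1 then t * y (2*u+1) - (y (2*u+3))⁻¹ * y (2*u+2)
      else t * y (2*u+1) := by
  have h1 : (2*u+1) % 2 = 1 := by omega
  simp only [yhatnc, h1, show 2*u+1+1 = 2*u+2 from by omega, show 2*u+1+2 = 2*u+3 from by omega,
    show (2*u+2)/2 = u+1 from by omega, show u+1+1 = u+2 from by omega, if_true, eq_self_iff_true]
  rw [if_pos hur]

lemma yh_even (r : ℕ) (t : E) (y : ℕ → E) (m : ℕ → ℤ) (u : ℕ) (hur : u + 1 ≤ r) :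
    yhatnc r t y m (2*u) =
      if m (u+1) = m u + 1 then t ^ 2 * (y (2*u+1) * y (2*u))
      else if m (u+1) = m u - 1 then (y (2*u+1))⁻¹ * y (2*u)
      else t * y (2*u) := by
  have h1 : ¬((2*u) % 2 = 1) := by omega
  simp only [yhatnc, if_neg h1, show (2*u)/2 = u from by omega]
  rw [if_pos hur]

lemma yh_top (r : ℕ) (t : E) (y : ℕ → E) (m : ℕ → ℤ) (j : ℕ) (hj : 2*r ≤ j + 1) :
    yhatnc r t y m j = t * y j := by
  simp only [yhatnc]
  by_cases h : j % 2 = 1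
  · rw [if_pos h, if_neg (by omega : ¬((j+1)/2 + 1 ≤ r))]
  · rw [if_neg h, if_neg (by omega : ¬(j/2 + 1 ≤ r))]

/-- Theorem 3.8 of Di Francesco–Kedem: invariance of
`F_m(t) = 1 + t·J^{(r)}(ŷ(m))·y₁` under noncommutative mutation of the weights,
in case (i) (`m_{i+1} = m_i + 1`) and case (ii) (`m_{i+1} = m_i`),
with `m_{i-1} = m_i` when `i ≥ 2`. -/
theorem stmt8 (r : ℕ) (hr : 2 ≤ r) (t : E) (htc : ∀ x : E, t * x = x * t) (htn : t ≠ 0)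
    (y : ℕ → E)
    (m : ℕ → ℤ) (hm : ∀ j, 1 ≤ j → j ≤ r - 1 → |m (j + 1) - m j| ≤ 1)
    (i : ℕ) (hi1 : 1 ≤ i) (hi2 : i ≤ r - 1)
    (hcase : (m (i + 1) = m i + 1 ∨ m (i + 1) = m i) ∧ (2 ≤ i → m (i - 1) = m i))
    (m' : ℕ → ℤ) (hm' : m' = fun j => if j = i then m i + 1 else m j)
    (y' : ℕ → E)
    (hy' : y' = fun j =>
      if j = 2 * i - 1 then y (2 * i - 1) + y (2 * i)
      else if j = 2 * i then
        y (2 * i + 1) * y (2 * i) * (y (2 * i - 1) + y (2 * i))⁻¹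
      else if j = 2 * i + 1 then
        y (2 * i + 1) * y (2 * i - 1) * (y (2 * i - 1) + y (2 * i))⁻¹
      else if j = 2 * i + 2 ∧ m (i + 1) = m i then
        y (2 * i + 2) * y (2 * i - 1) * (y (2 * i - 1) + y (2 * i))⁻¹
      else y j)
    -- genericity: every element inverted in forming ŷ(m), ŷ(m'), y' is nonzero
    (hgen1 : ∀ j, 1 ≤ j → j ≤ r - 1 → y (2 * j + 1) ≠ 0)
    (hgen1' : ∀ j, 1 ≤ j → j ≤ r - 1 → y' (2 * j + 1) ≠ 0)
    (hgen2 : y (2 * i - 1) + y (2 * i) ≠ 0)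
    -- genericity: every denominator in the recursive evaluation of the fractions is nonzero
    (hgen3 : JncGen r (yhatnc r t y m))
    (hgen4 : JncGen r (yhatnc r t y' m')) :
    (2 ≤ i → 1 + t * Jnc r (yhatnc r t y m) * y 1 =
      1 + t * Jnc r (yhatnc r t y' m') * y' 1) ∧
    (i = 1 → 1 + t * Jnc r (yhatnc r t y m) * y 1 =
      1 + t * (1 + t * Jnc r (yhatnc r t y' m') * y' 1) * y 1) := by
  have ht := htc
  obtain ⟨hc1, hc2⟩ := hcase
  obtain ⟨p, rfl⟩ : ∃ p, i = p + 1 := ⟨i - 1, by omega⟩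
  obtain ⟨s, rfl⟩ : ∃ s, r = p + 2 + s := ⟨r - (p + 2), by omega⟩
  clear hm hr hi1 hi2 htn
  -- normalize indices in hypotheses
  rw [show 2*(p+1)+2 = 2*p+4 from by omega, show 2*(p+1)+1 = 2*p+3 from by omega,
    show 2*(p+1)-1 = 2*p+1 from by omega, show 2*(p+1) = 2*p+2 from by omega,
    show p+1+1 = p+2 from by omega] at hy'
  rw [show p+1+1 = p+2 from by omega] at hc1
  rw [show p+1-1 = p from by omega] at hc2
  rw [show 2*(p+1)-1 = 2*p+1 from by omega, show 2*(p+1) = 2*p+2 from by omega] at hgen2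
  have hc0 : y (2*p+3) ≠ 0 := by
    have h := hgen1 (p+1) (by omega) (by omega)
    rwa [show 2*(p+1)+1 = 2*p+3 from by omega] at h
  have hgy' := hgen1' (p+1) (by omega) (by omega)
  rw [show 2*(p+1)+1 = 2*p+3 from by omega] at hgy'
  -- m' values
  have hm'i : m' (p+1) = m (p+1) + 1 := by rw [hm']; simp
  have hm'ne : ∀ u, u ≠ p+1 → m' u = m u := by intro u hu; rw [hm']; simp [hu]
  -- y' values
  have hy'lo : ∀ j, j ≤ 2*p → y' j = y j := by
    intro j hj
    rw [hy']
    dsimp only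
    rw [if_neg (by omega), if_neg (by omega), if_neg (by omega),
      if_neg (by rintro ⟨h, -⟩; omega)]
  have hy'hi : ∀ j, 2*p+5 ≤ j → y' j = y j := by
    intro j hj
    rw [hy']
    dsimp only
    rw [if_neg (by omega), if_neg (by omega), if_neg (by omega),
      if_neg (by rintro ⟨h, -⟩; omega)]
  have hy'1 : y' (2*p+1) = y (2*p+1) + y (2*p+2) := by
    rw [hy']
    dsimp only
    rw [if_pos rfl]
  have hy'2 : y' (2*p+2) = y (2*p+3) * y (2*p+2) * (y (2*p+1) + y (2*p+2))⁻¹ := by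
    rw [hy']
    dsimp only
    rw [if_neg (by omega), if_pos rfl]
  have hy'3 : y' (2*p+3) = y (2*p+3) * y (2*p+1) * (y (2*p+1) + y (2*p+2))⁻¹ := by
    rw [hy']
    dsimp only
    rw [if_neg (by omega), if_neg (by omega), if_pos rfl]
  rw [hy'3] at hgy'
  have hD0 : y (2*p+1) + y (2*p+2) ≠ 0 := hgen2
  have ha0 : y (2*p+1) ≠ 0 := by
    intro h0; apply hgy'; rw [h0, mul_zero, zero_mul]
  have hsplit : y (2*p+3) * y (2*p+1) * (y (2*p+1) + y (2*p+2))⁻¹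
      = y (2*p+3) - y (2*p+3) * y (2*p+2) * (y (2*p+1) + y (2*p+2))⁻¹ := by
    rw [eq_sub_iff_add_eq, ← add_mul, ← mul_add, mul_assoc, mul_inv_cancel₀ hD0, mul_one]
  set H := yhatnc (p+2+s) t y m with hH
  set H' := yhatnc (p+2+s) t y' m' with hH'
  -- H' agrees with H above level p+2
  have hhigh : ∀ j, 2*p+5 ≤ j → H' j = H j := by
    intro j hj
    rw [hH', hH]
    simp only [yhatnc]
    rw [hm'ne ((j+1)/2 + 1) (by omega), hm'ne ((j+1)/2) (by omega),
      hm'ne (j/2 + 1) (by omega), hm'ne (j/2) (by omega),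
      hy'hi j (by omega), hy'hi (j+1) (by omega), hy'hi (j+2) (by omega)]
  have hlowH : ∀ j, j + 2 ≤ 2*p → H' j = H j := by
    intro j hj
    rw [hH', hH]
    simp only [yhatnc]
    rw [hm'ne ((j+1)/2 + 1) (by omega), hm'ne ((j+1)/2) (by omega),
      hm'ne (j/2 + 1) (by omega), hm'ne (j/2) (by omega),
      hy'lo j (by omega), hy'lo (j+1) (by omega), hy'lo (j+2) (by omega)]
  -- the common tail
  have hTT : Jnc s (fun j => H' (j + (2*p+4))) = Jnc s (fun j => H (j + (2*p+4))) :=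
    Jnc_congr s _ _ (fun j h1 h2 => hhigh (j + (2*p+4)) (by omega))
  set TT := Jnc s (fun j => H (j + (2*p+4))) with hTTd
  -- unfoldings
  have hCeq : Jnc (s+1) (fun j => H (j + (2*p+2))) = (1 - H (2*p+3) - TT * H (2*p+4))⁻¹ := by
    rw [Jnc_succ]
    show (1 - H (1 + (2*p+2)) - Jnc s (fun j => H (j + 2 + (2*p+2))) * H (2 + (2*p+2)))⁻¹ = _
    rw [show 1 + (2*p+2) = 2*p+3 from by omega, show 2 + (2*p+2) = 2*p+4 from by omega,
      show (fun j => H (j + 2 + (2*p+2))) = (fun j => H (j + (2*p+4))) from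
        funext fun j => by congr 1; omega]
  have hC'eq : Jnc (s+1) (fun j => H' (j + (2*p+2))) = (1 - H' (2*p+3) - TT * H' (2*p+4))⁻¹ := by
    rw [Jnc_succ]
    show (1 - H' (1 + (2*p+2)) - Jnc s (fun j => H' (j + 2 + (2*p+2))) * H' (2 + (2*p+2)))⁻¹ = _
    rw [show 1 + (2*p+2) = 2*p+3 from by omega, show 2 + (2*p+2) = 2*p+4 from by omega,
      show (fun j => H' (j + 2 + (2*p+2))) = (fun j => H' (j + (2*p+4))) from
        funext fun j => by congr 1; omega, hTT]
  have hBeq : Jnc (s+2) (fun j => H (j + 2*p))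
      = (1 - H (2*p+1) - (1 - H (2*p+3) - TT * H (2*p+4))⁻¹ * H (2*p+2))⁻¹ := by
    rw [Jnc_succ]
    show (1 - H (1 + 2*p) - Jnc (s+1) (fun j => H (j + 2 + 2*p)) * H (2 + 2*p))⁻¹ = _
    rw [show 1 + 2*p = 2*p+1 from by omega, show 2 + 2*p = 2*p+2 from by omega,
      show (fun j => H (j + 2 + 2*p)) = (fun j => H (j + (2*p+2))) from
        funext fun j => by congr 1; omega, hCeq]
  have hB'eq : Jnc (s+2) (fun j => H' (j + 2*p))
      = (1 - H' (2*p+1) - (1 - H' (2*p+3) - TT * H' (2*p+4))⁻¹ * H' (2*p+2))⁻¹ := by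
    rw [Jnc_succ]
    show (1 - H' (1 + 2*p) - Jnc (s+1) (fun j => H' (j + 2 + 2*p)) * H' (2 + 2*p))⁻¹ = _
    rw [show 1 + 2*p = 2*p+1 from by omega, show 2 + 2*p = 2*p+2 from by omega,
      show (fun j => H' (j + 2 + 2*p)) = (fun j => H' (j + (2*p+2))) from
        funext fun j => by congr 1; omega, hC'eq]
  -- nonvanishing of the relevant denominators, from JncGen
  have g3 : JncGen ((s+2) + p) H := by
    have h := hgen3; rwa [show p+2+s = (s+2)+p from by omega] at h
  have g4 : JncGen ((s+2) + p) H' := by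
    have h := hgen4; rwa [show p+2+s = (s+2)+p from by omega] at h
  obtain ⟨hBne, gX⟩ := JncGen_drop p (s+2) H g3
  obtain ⟨hB'ne, gX'⟩ := JncGen_drop p (s+2) H' g4
  obtain ⟨hXne, -⟩ := (gX : JncGen ((s)+1) _)
  obtain ⟨hX'ne, -⟩ := (gX' : JncGen ((s)+1) _)
  simp only [] at hBne hB'ne hXne hX'ne
  rw [show (1:ℕ) + 2*p = 2*p+1 from by omega, show 2 + 2*p = 2*p+2 from by omega,
    show (fun j => H (j + 2 + 2*p)) = (fun j => H (j + (2*p+2))) from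
      funext fun j => by congr 1; omega, hCeq] at hBne
  rw [show (1:ℕ) + 2*p = 2*p+1 from by omega, show 2 + 2*p = 2*p+2 from by omega,
    show (fun j => H' (j + 2 + 2*p)) = (fun j => H' (j + (2*p+2))) from
      funext fun j => by congr 1; omega, hC'eq] at hB'ne
  rw [show (1:ℕ) + 2 + 2*p = 2*p+3 from by omega, show 2 + 2 + 2*p = 2*p+4 from by omega,
    show (fun j => H (j + 2 + 2 + 2*p)) = (fun j => H (j + (2*p+4))) from
      funext fun j => by congr 1; omega, ← hTTd] at hXne
  rw [show (1:ℕ) + 2 + 2*p = 2*p+3 from by omega, show 2 + 2 + 2*p = 2*p+4 from by omega,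
    show (fun j => H' (j + 2 + 2 + 2*p)) = (fun j => H' (j + (2*p+4))) from
      funext fun j => by congr 1; omega, hTT] at hX'ne
  -- the central identity: B = 1 + t * B' * D
  have SB : Jnc (s+2) (fun j => H (j + 2*p))
      = 1 + t * Jnc (s+2) (fun j => H' (j + 2*p)) * (y (2*p+1) + y (2*p+2)) := by
    rw [hBeq, hB'eq]
    rcases hc1 with hstep1 | hstep0
    · -- case (i): m (p+2) = m (p+1) + 1
      have hy'4 : y' (2*p+4) = y (2*p+4) := by
        rw [hy']
        dsimp only
        rw [if_neg (by omega), if_neg (by omega), if_neg (by omega),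
          if_neg (by rintro ⟨-, h⟩; omega)]
      have hv1 : H (2*p+1) = t * (y (2*p+1) + y (2*p+2)) := by
        rw [hH, yh_odd _ t y m p (by omega), if_pos hstep1]
      have hv2 : H (2*p+2) = t ^ 2 * (y (2*p+3) * y (2*p+2)) := by
        rw [hH]
        have e := yh_even (p+2+s) t y m (p+1) (by omega)
        simp only [show 2*(p+1)+3 = 2*p+5 from by omega, show 2*(p+1)+2 = 2*p+4 from by omega,
          show 2*(p+1)+1 = 2*p+3 from by omega, show 2*(p+1) = 2*p+2 from by omega,
          show 2*p+2+1 = 2*p+3 from by omega, show 2*p+2+2 = 2*p+4 from by omega,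
          show 2*p+2+3 = 2*p+5 from by omega, show p+1+2 = p+3 from by omega,
          show p+1+1 = p+2 from by omega] at e
        rw [e, if_pos hstep1]
      have hcnd1 : ¬ (m' (p+2) = m' (p+1) + 1) := by
        have e1 := hm'ne (p+2) (by omega)
        omega
      have hcnd2 : ¬ (m' (p+2) = m' (p+1) - 1) := by
        have e1 := hm'ne (p+2) (by omega)
        omega
      have hv1' : H' (2*p+1) = t * (y (2*p+1) + y (2*p+2)) := by
        rw [hH', yh_odd _ t y' m' p (by omega), if_neg hcnd1, if_neg hcnd2, hy'1]
      have hv2' : H' (2*p+2) = t * (y (2*p+3) * y (2*p+2) * (y (2*p+1) + y (2*p+2))⁻¹) := by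
        rw [hH']
        have e := yh_even (p+2+s) t y' m' (p+1) (by omega)
        simp only [show 2*(p+1)+3 = 2*p+5 from by omega, show 2*(p+1)+2 = 2*p+4 from by omega,
          show 2*(p+1)+1 = 2*p+3 from by omega, show 2*(p+1) = 2*p+2 from by omega,
          show 2*p+2+1 = 2*p+3 from by omega, show 2*p+2+2 = 2*p+4 from by omega,
          show 2*p+2+3 = 2*p+5 from by omega, show p+1+2 = p+3 from by omega,
          show p+1+1 = p+2 from by omega] at e
        rw [e, if_neg hcnd1, if_neg hcnd2, hy'2]
      have L1 : H' (2*p+3) = H (2*p+3)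
          - t * (y (2*p+3) * y (2*p+2) * (y (2*p+1) + y (2*p+2))⁻¹) := by
        rcases s with - | s'
        · rw [hH', hH, yh_top _ t y' m' (2*p+3) (by omega), yh_top _ t y m (2*p+3) (by omega),
            hy'3, hsplit, mul_sub]
        · have e := yh_odd (p+2+(s'+1)) t y' m' (p+1) (by omega)
          have e' := yh_odd (p+2+(s'+1)) t y m (p+1) (by omega)
          simp only [show 2*(p+1)+3 = 2*p+5 from by omega, show 2*(p+1)+2 = 2*p+4 from by omega,
          show 2*(p+1)+1 = 2*p+3 from by omega, show 2*(p+1) = 2*p+2 from by omega,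
          show 2*p+2+1 = 2*p+3 from by omega, show 2*p+2+2 = 2*p+4 from by omega,
          show 2*p+2+3 = 2*p+5 from by omega, show p+1+2 = p+3 from by omega,
          show p+1+1 = p+2 from by omega] at e e'
          rw [hm'ne (p+3) (by omega), hm'ne (p+2) (by omega),
            hy'3, hy'4, hy'hi (2*p+5) (by omega)] at e
          rw [hH', hH, e, e']
          by_cases h1 : m (p+3) = m (p+2) + 1
          · rw [if_pos h1, if_pos h1, hsplit, ← mul_sub]
            congr 1
            abel
          · rw [if_neg h1, if_neg h1]
            by_cases h2 : m (p+3) = m (p+2) - 1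
            · rw [if_pos h2, if_pos h2, hsplit, mul_sub]
              abel
            · rw [if_neg h2, if_neg h2, hsplit, mul_sub]
      have L2 : H' (2*p+4) = H (2*p+4) := by
        rcases s with - | s'
        · rw [hH', hH, yh_top _ t y' m' (2*p+4) (by omega), yh_top _ t y m (2*p+4) (by omega),
            hy'4]
        · have e := yh_even (p+2+(s'+1)) t y' m' (p+2) (by omega)
          have e' := yh_even (p+2+(s'+1)) t y m (p+2) (by omega)
          simp only [show 2*(p+2)+1 = 2*p+5 from by omega, show 2*(p+2) = 2*p+4 from by omega,
          show 2*p+4+1 = 2*p+5 from by omega, show p+2+1 = p+3 from by omega] at e e'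
          rw [hm'ne (p+3) (by omega), hm'ne (p+2) (by omega),
            hy'4, hy'hi (2*p+5) (by omega)] at e
          rw [hH', hH, e, e']
      have ew : (1:E) - (H (2*p+3) - t * (y (2*p+3) * y (2*p+2) * (y (2*p+1) + y (2*p+2))⁻¹))
            - TT * H (2*p+4)
          = (1 - H (2*p+3) - TT * H (2*p+4))
            + t * (y (2*p+3) * y (2*p+2) * (y (2*p+1) + y (2*p+2))⁻¹) := by
        abel
      rw [hv1, hv2, hv1', hv2', L1, L2, ew]
      rw [hv1, hv2] at hBne
      rw [hv1', hv2', L1, L2, ew] at hB'ne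
      rw [L1, L2, ew] at hX'ne
      exact key1 t (y (2*p+1) + y (2*p+2)) (y (2*p+3) * y (2*p+2))
        (1 - H (2*p+3) - TT * H (2*p+4)) ht hD0 hXne hX'ne hBne hB'ne
    · -- case (ii): m (p+2) = m (p+1)
      have hy'4 : y' (2*p+4) = y (2*p+4) * y (2*p+1) * (y (2*p+1) + y (2*p+2))⁻¹ := by
        rw [hy']
        dsimp only
        rw [if_neg (by omega), if_neg (by omega), if_neg (by omega),
          if_pos (⟨rfl, hstep0⟩ : 2*p+4 = 2*p+4 ∧ m (p+2) = m (p+1))]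
      have hv1 : H (2*p+1) = t * y (2*p+1) := by
        rw [hH, yh_odd _ t y m p (by omega), if_neg (by omega), if_neg (by omega)]
      have hv2 : H (2*p+2) = t * y (2*p+2) := by
        rw [hH]
        have e := yh_even (p+2+s) t y m (p+1) (by omega)
        simp only [show 2*(p+1)+3 = 2*p+5 from by omega, show 2*(p+1)+2 = 2*p+4 from by omega,
          show 2*(p+1)+1 = 2*p+3 from by omega, show 2*(p+1) = 2*p+2 from by omega,
          show 2*p+2+1 = 2*p+3 from by omega, show 2*p+2+2 = 2*p+4 from by omega,
          show 2*p+2+3 = 2*p+5 from by omega, show p+1+2 = p+3 from by omega,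
          show p+1+1 = p+2 from by omega] at e
        rw [e, if_neg (by omega), if_neg (by omega)]
      have hcnd1 : ¬ (m' (p+2) = m' (p+1) + 1) := by
        have e1 := hm'ne (p+2) (by omega)
        omega
      have hcnd2 : m' (p+2) = m' (p+1) - 1 := by
        have e1 := hm'ne (p+2) (by omega)
        omega
      have hv1' : H' (2*p+1) = t * (y (2*p+1) + y (2*p+2))
          - (y (2*p+3) * y (2*p+1) * (y (2*p+1) + y (2*p+2))⁻¹)⁻¹
            * (y (2*p+3) * y (2*p+2) * (y (2*p+1) + y (2*p+2))⁻¹) := by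
        rw [hH', yh_odd _ t y' m' p (by omega), if_neg hcnd1, if_pos hcnd2, hy'1, hy'2, hy'3]
      have hv2' : H' (2*p+2) = (y (2*p+3) * y (2*p+1) * (y (2*p+1) + y (2*p+2))⁻¹)⁻¹
            * (y (2*p+3) * y (2*p+2) * (y (2*p+1) + y (2*p+2))⁻¹) := by
        rw [hH']
        have e := yh_even (p+2+s) t y' m' (p+1) (by omega)
        simp only [show 2*(p+1)+3 = 2*p+5 from by omega, show 2*(p+1)+2 = 2*p+4 from by omega,
          show 2*(p+1)+1 = 2*p+3 from by omega, show 2*(p+1) = 2*p+2 from by omega,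
          show 2*p+2+1 = 2*p+3 from by omega, show 2*p+2+2 = 2*p+4 from by omega,
          show 2*p+2+3 = 2*p+5 from by omega, show p+1+2 = p+3 from by omega,
          show p+1+1 = p+2 from by omega] at e
        rw [e, if_neg hcnd1, if_pos hcnd2, hy'2, hy'3]
      have L3 : H' (2*p+3) = H (2*p+3) * (y (2*p+1) * (y (2*p+1) + y (2*p+2))⁻¹) := by
        rcases s with - | s'
        · rw [hH', hH, yh_top _ t y' m' (2*p+3) (by omega), yh_top _ t y m (2*p+3) (by omega),
            hy'3, mul_assoc (y (2*p+3)) (y (2*p+1)), ← mul_assoc t]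
        · have e := yh_odd (p+2+(s'+1)) t y' m' (p+1) (by omega)
          have e' := yh_odd (p+2+(s'+1)) t y m (p+1) (by omega)
          simp only [show 2*(p+1)+3 = 2*p+5 from by omega, show 2*(p+1)+2 = 2*p+4 from by omega,
          show 2*(p+1)+1 = 2*p+3 from by omega, show 2*(p+1) = 2*p+2 from by omega,
          show 2*p+2+1 = 2*p+3 from by omega, show 2*p+2+2 = 2*p+4 from by omega,
          show 2*p+2+3 = 2*p+5 from by omega, show p+1+2 = p+3 from by omega,
          show p+1+1 = p+2 from by omega] at e e'
          rw [hm'ne (p+3) (by omega), hm'ne (p+2) (by omega),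
            hy'3, hy'4, hy'hi (2*p+5) (by omega)] at e
          rw [hH', hH, e, e']
          by_cases h1 : m (p+3) = m (p+2) + 1
          · rw [if_pos h1, if_pos h1, mul_assoc (y (2*p+3)) (y (2*p+1)),
              mul_assoc (y (2*p+4)) (y (2*p+1)), ← add_mul, ← mul_assoc t]
          · rw [if_neg h1, if_neg h1]
            by_cases h2 : m (p+3) = m (p+2) - 1
            · rw [if_pos h2, if_pos h2, sub_mul, mul_assoc (y (2*p+3)) (y (2*p+1)),
                mul_assoc (y (2*p+4)) (y (2*p+1)), ← mul_assoc t,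
                ← mul_assoc ((y (2*p+5))⁻¹)]
            · rw [if_neg h2, if_neg h2, mul_assoc (y (2*p+3)) (y (2*p+1)), ← mul_assoc t]
      have L4 : H' (2*p+4) = H (2*p+4) * (y (2*p+1) * (y (2*p+1) + y (2*p+2))⁻¹) := by
        rcases s with - | s'
        · rw [hH', hH, yh_top _ t y' m' (2*p+4) (by omega), yh_top _ t y m (2*p+4) (by omega),
            hy'4, mul_assoc (y (2*p+4)) (y (2*p+1)), ← mul_assoc t]
        · have e := yh_even (p+2+(s'+1)) t y' m' (p+2) (by omega)
          have e' := yh_even (p+2+(s'+1)) t y m (p+2) (by omega)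
          simp only [show 2*(p+2)+1 = 2*p+5 from by omega, show 2*(p+2) = 2*p+4 from by omega,
          show 2*p+4+1 = 2*p+5 from by omega, show p+2+1 = p+3 from by omega] at e e'
          rw [hm'ne (p+3) (by omega), hm'ne (p+2) (by omega),
            hy'4, hy'hi (2*p+5) (by omega)] at e
          rw [hH', hH, e, e']
          by_cases h1 : m (p+3) = m (p+2) + 1
          · rw [if_pos h1, if_pos h1, mul_assoc (y (2*p+4)) (y (2*p+1)),
              ← mul_assoc (y (2*p+5)), mul_assoc (t^2)]
          · rw [if_neg h1, if_neg h1]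
            by_cases h2 : m (p+3) = m (p+2) - 1
            · rw [if_pos h2, if_pos h2, mul_assoc (y (2*p+4)) (y (2*p+1)),
                ← mul_assoc ((y (2*p+5))⁻¹)]
            · rw [if_neg h2, if_neg h2, mul_assoc (y (2*p+4)) (y (2*p+1)), ← mul_assoc t]
      have ew2 : (1:E) - H (2*p+3) * (y (2*p+1) * (y (2*p+1) + y (2*p+2))⁻¹)
            - TT * (H (2*p+4) * (y (2*p+1) * (y (2*p+1) + y (2*p+2))⁻¹))
          = 1 - (1 - (1 - H (2*p+3) - TT * H (2*p+4)))
              * (y (2*p+1) * (y (2*p+1) + y (2*p+2))⁻¹) := by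
        noncomm_ring
      rw [hv1, hv2, hv1', hv2', L3, L4, ew2]
      rw [hv1, hv2] at hBne
      rw [hv1', hv2', L3, L4, ew2] at hB'ne
      rw [L3, L4, ew2] at hX'ne
      exact key2 t (y (2*p+1)) (y (2*p+2)) (y (2*p+3))
        (1 - H (2*p+3) - TT * H (2*p+4)) ht ha0 hc0 hD0 hXne hX'ne hBne hB'ne
  constructor
  · -- i ≥ 2
    intro h2i
    obtain ⟨q, rfl⟩ : ∃ q, p = q + 1 := ⟨p - 1, by omega⟩
    have hstepA : m (q+1) = m (q+2) := by
      have h := hc2 h2i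
      rwa [show q+1+1 = q+2 from by omega] at h
    simp only [show 2*(q+1)+2 = 2*q+4 from by omega, show 2*(q+1)+1 = 2*q+3 from by omega,
      show 2*(q+1) = 2*q+2 from by omega, show 2*q+2+1 = 2*q+3 from by omega,
      show 2*q+2+2 = 2*q+4 from by omega] at SB hy'1 hy'lo
    -- value lemmas at level q+1 (= i-1)
    have e1 : m' (q+2) = m (q+2) + 1 := by
      have := hm'i
      have e0 : q+1+1 = q+2 := by omega
      rwa [e0] at this
    have e2 : m' (q+1) = m (q+1) := hm'ne (q+1) (by omega)
    have HA1 : H (2*q+1) = t * y (2*q+1) := by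
      rw [hH, yh_odd _ t y m q (by omega), if_neg (by omega), if_neg (by omega)]
    have HA2 : H (2*q+2) = t * y (2*q+2) := by
      rw [hH]
      have e := yh_even (q+1+2+s) t y m (q+1) (by omega)
      simp only [show 2*(q+1)+1 = 2*q+3 from by omega, show 2*(q+1) = 2*q+2 from by omega,
        show 2*q+2+1 = 2*q+3 from by omega, show q+1+1 = q+2 from by omega] at e
      rw [e, if_neg (by omega), if_neg (by omega)]
    have hcnd : m' (q+2) = m' (q+1) + 1 := by omega
    have HA1' : H' (2*q+1) = t * (y (2*q+1) + y (2*q+2)) := by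
      rw [hH', yh_odd _ t y' m' q (by omega), if_pos hcnd,
        hy'lo (2*q+1) (by omega), hy'lo (2*q+2) (by omega)]
    have HA2' : H' (2*q+2) = t ^ 2 * ((y (2*q+3) + y (2*q+4)) * y (2*q+2)) := by
      rw [hH']
      have e := yh_even (q+1+2+s) t y' m' (q+1) (by omega)
      simp only [show 2*(q+1)+1 = 2*q+3 from by omega, show 2*(q+1) = 2*q+2 from by omega,
        show 2*q+2+1 = 2*q+3 from by omega, show q+1+1 = q+2 from by omega] at e
      rw [e, if_pos hcnd, hy'1, hy'lo (2*q+2) (by omega)]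
    -- glue
    rw [show q+1+2+s = (s+3)+q from by omega]
    have hagree : ∀ j, 1 ≤ j → j ≤ 2*q → H j = H' j :=
      fun j hj1 hj2 => (hlowH j (by omega)).symm
    have htail : Jnc (s+3) (fun j => H (j + 2*q)) = Jnc (s+3) (fun j => H' (j + 2*q)) := by
      rw [show s+3 = (s+2)+1 from by omega, Jnc_succ, Jnc_succ]
      show (1 - H (1 + 2*q) - Jnc (s+2) (fun j => H (j + 2 + 2*q)) * H (2 + 2*q))⁻¹
        = (1 - H' (1 + 2*q) - Jnc (s+2) (fun j => H' (j + 2 + 2*q)) * H' (2 + 2*q))⁻¹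
      rw [show 1 + 2*q = 2*q+1 from by omega, show 2 + 2*q = 2*q+2 from by omega,
        show (fun j => H (j + 2 + 2*q)) = (fun j => H (j + (2*q+2))) from
          funext fun j => by congr 1; omega,
        show (fun j => H' (j + 2 + 2*q)) = (fun j => H' (j + (2*q+2))) from
          funext fun j => by congr 1; omega,
        SB, HA1, HA2, HA1', HA2']
      congr 1
      have hmove : (1 + t * Jnc (s+2) (fun j => H' (j + (2*q+2))) * (y (2*q+3) + y (2*q+4)))
            * (t * y (2*q+2))
          = t * y (2*q+2) + Jnc (s+2) (fun j => H' (j + (2*q+2)))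
              * (t ^ 2 * ((y (2*q+3) + y (2*q+4)) * y (2*q+2))) := by
        rw [add_mul, one_mul]
        simp only [pow_two, mul_assoc]
        rw [comm3 ht (Jnc (s+2) (fun j => H' (j + (2*q+2))))
          ((y (2*q+3) + y (2*q+4)) * (t * y (2*q+2)))]
        rw [comm3 ht (y (2*q+3) + y (2*q+4)) (y (2*q+2))]
      rw [hmove, mul_add t (y (2*q+1)) (y (2*q+2))]
      abel
    rw [Jnc_ext q (s+3) H H' hagree htail, hy'lo 1 (by omega)]
  · -- i = 1
    intro h1
    have hp0 : p = 0 := by omega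
    subst hp0
    rw [show (0:ℕ)+2+s = s+2 from by omega]
    have e1 : (fun j => H (j + 2*0)) = H := by funext j; congr 1
    have e2 : (fun j => H' (j + 2*0)) = H' := by funext j; congr 1
    rw [e1, e2, show 2*0+1 = 1 from by omega, show 2*0+2 = 2 from by omega] at SB
    have hy1 : y' 1 = y 1 + y 2 := by
      have := hy'1
      simp only [show 2*0+1 = 1 from by omega, show 2*0+2 = 2 from by omega] at this
      exact this
    rw [SB, hy1]

end Stmt8
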